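/- Let α be monic, singleton-inductive weights on multi-faced partitions and define cumulants by the symmetric moment-cumulant relation. Suppose A is a multi-faced algebra with unital faces (units 1^Q) and φ a linear functional with φ(1^Q) = 1 for all faces Q and vanishing on the ideal generated by the differences 1^q − 1^Q. Then for every n > 1 and any tensor a₁ ⊗ ⋯ ⊗ aₙ with a_s = 1^Q for some index s, the cumulant functional satisfies log_α φ̂ (a₁ ⊗ ⋯ ⊗ aₙ) = 0. -/

import Mathlib

/-! Since `φ` kills `x (1^q - 1^Q) y`, it cannot tell the unit `1^Q` from the unit of a
neighbouring entry, which that entry absorbs; so the moment of any subfamily `S ∋ s` with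
`|S| ≥ 2` equals the moment of `S ∖ {s}`. In the moment-cumulant expansion of `S`, the
partitions having `{s}` as a block contribute, by singleton inductivity and
`κ({s}) = φ(1^Q) = 1`, exactly the expansion of `S ∖ {s}`. By induction on `|S|`, every other
partition except the one-block partition contains a vanishing cumulant, so what remains is
`α(1_S) κ(S) = κ(S)`, which must be `0`. -/

/-- `P` is a set partition of the finite set `S`. -/
def IsPartitionOf {γ : Type} [DecidableEq γ] (S : Finset γ) (P : Finset (Finset γ)) : Prop :=
  (∀ b ∈ P, b.Nonempty ∧ b ⊆ S) ∧ ∀ i ∈ S, (P.filter (fun b => i ∈ b)).card = 1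

instance {γ : Type} [DecidableEq γ] (S : Finset γ) : DecidablePred (IsPartitionOf S) := by
  intro P; unfold IsPartitionOf; infer_instance

/-- The finite set of all set partitions of `S ⊆ Fin n`. -/
def partitionsOf {n : ℕ} (S : Finset (Fin n)) : Finset (Finset (Finset (Fin n))) :=
  Finset.univ.filter (IsPartitionOf S)

/-- A multi-faced partition: a length, a face word and a set partition (as a setoid). -/
structure MFP (F : Type) where
  n : ℕ
  face : Fin n → F
  rel : Setoid (Fin n)

/-- The multi-faced partition on `S` (with the induced order) with faces induced by the
face word `f` and blocks given by `P`. -/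
def MFP.ofBlocks {F : Type} {n : ℕ} (f : Fin n → F) (S : Finset (Fin n))
    (P : Finset (Finset (Fin n))) : MFP F where
  n := S.card
  face := fun j => f (S.orderIsoOfFin rfl j).1
  rel := Setoid.ker (fun j => P.filter (fun b => (S.orderIsoOfFin rfl j).1 ∈ b))

/-- Ordered product of the family `a` over the index set `S`. -/
def oprod {A : Type} [Monoid A] {n : ℕ} (a : Fin n → A) (S : Finset (Fin n)) : A :=
  ((S.sort (· ≤ ·)).map a).prod

/-- `c` is the family of `α`-cumulants of the multi-faced family `a` (with face word `f`)
with respect to the functional `Φ`: the symmetric moment-cumulant relation holds on every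
nonempty subfamily. -/
def MomentCumulantRel {F A : Type} [Ring A] (α : MFP F → ℂ) {n : ℕ}
    (f : Fin n → F) (Φ : A → ℂ) (a : Fin n → A) (c : Finset (Fin n) → ℂ) : Prop :=
  ∀ S : Finset (Fin n), S.Nonempty →
    Φ (oprod a S) = ∑ P ∈ partitionsOf S, α (MFP.ofBlocks f S P) * ∏ β ∈ P, c β

namespace IsPartitionOf

variable {γ : Type} [DecidableEq γ] {S : Finset γ} {P : Finset (Finset γ)}

theorem exists_mem_block (h : IsPartitionOf S P) {i : γ} (hi : i ∈ S) :
    ∃ b ∈ P, i ∈ b := by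
  obtain ⟨b, hb⟩ := Finset.card_eq_one.1 (h.2 i hi)
  have hbi : b ∈ P.filter (i ∈ ·) := hb ▸ Finset.mem_singleton_self b
  exact ⟨b, Finset.mem_filter.1 hbi⟩

theorem eq_of_mem_of_mem (h : IsPartitionOf S P) {b b' : Finset γ} (hb : b ∈ P) (hb' : b' ∈ P)
    {i : γ} (hib : i ∈ b) (hib' : i ∈ b') : b = b' :=
  Finset.card_le_one.1 (h.2 i ((h.1 b hb).2 hib)).le b (Finset.mem_filter.2 ⟨hb, hib⟩) b'
    (Finset.mem_filter.2 ⟨hb', hib'⟩)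

theorem eq_singleton_of_mem (h : IsPartitionOf S P) (hS : S ∈ P) : P = {S} := by
  refine Finset.eq_singleton_iff_unique_mem.2 ⟨hS, fun b hb => ?_⟩
  obtain ⟨⟨i, hi⟩, hbS⟩ := h.1 b hb
  exact h.eq_of_mem_of_mem hb hS hi (hbS hi)

theorem singleton_notMem {s : γ} (h : IsPartitionOf S P) (hs : s ∉ S) : {s} ∉ P :=
  fun hP => hs ((h.1 _ hP).2 (Finset.mem_singleton_self s))

theorem erase_singleton {s : γ} (h : IsPartitionOf S P) (hs : {s} ∈ P) :
    IsPartitionOf (S.erase s) (P.erase {s}) := by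
  refine ⟨fun b hb => ?_, fun i hi => ?_⟩
  · obtain ⟨hbs, hbP⟩ := Finset.mem_erase.1 hb
    refine ⟨(h.1 b hbP).1, fun x hx => Finset.mem_erase.2 ⟨?_, (h.1 b hbP).2 hx⟩⟩
    rintro rfl
    exact hbs (h.eq_of_mem_of_mem hbP hs hx (Finset.mem_singleton_self x))
  · obtain ⟨his, hi⟩ := Finset.mem_erase.1 hi
    rw [Finset.filter_erase, Finset.erase_eq_of_notMem (by simp [his])]
    exact h.2 i hi

theorem insert_singleton {s : γ} (h : IsPartitionOf (S.erase s) P) (hs : s ∈ S) :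
    IsPartitionOf S (insert {s} P) := by
  refine ⟨fun b hb => ?_, fun i hi => ?_⟩
  · rcases Finset.mem_insert.1 hb with rfl | hb
    · exact ⟨Finset.singleton_nonempty s, Finset.singleton_subset_iff.2 hs⟩
    · exact ⟨(h.1 b hb).1, (h.1 b hb).2.trans (Finset.erase_subset s S)⟩
  · rw [Finset.filter_insert]
    by_cases his : i = s
    · subst his
      have : P.filter (i ∈ ·) = ∅ :=
        Finset.filter_eq_empty_iff.2 fun b hb hib => by simpa using (h.1 b hb).2 hib
      simp [this]
    · rw [if_neg (by simpa using his)]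
      exact h.2 i (Finset.mem_erase.2 ⟨his, hi⟩)

end IsPartitionOf

theorem isPartitionOf_singleton_self {γ : Type} [DecidableEq γ] {S : Finset γ}
    (hS : S.Nonempty) : IsPartitionOf S {S} :=
  ⟨fun b hb => by rw [Finset.mem_singleton.1 hb]; exact ⟨hS, subset_rfl⟩, fun i hi => by
    rw [Finset.filter_singleton, if_pos hi, Finset.card_singleton]⟩

theorem isPartitionOf_singleton_iff {γ : Type} [DecidableEq γ] {s : γ}
    {P : Finset (Finset γ)} : IsPartitionOf {s} P ↔ P = {{s}} := by
  refine ⟨fun h => h.eq_singleton_of_mem ?_,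
    fun h => h ▸ isPartitionOf_singleton_self (Finset.singleton_nonempty s)⟩
  obtain ⟨b, hb, hsb⟩ := h.exists_mem_block (Finset.mem_singleton_self s)
  rwa [← Finset.Subset.antisymm (h.1 b hb).2 (Finset.singleton_subset_iff.2 hsb)]

theorem Finset.sort_erase_le {α : Type} [LinearOrder α] (S : Finset α) (s : α) :
    (S.erase s).sort (· ≤ ·) = (S.sort (· ≤ ·)).erase s := by
  refine List.Perm.eq_of_pairwise' (Finset.pairwise_sort _ _)
    ((Finset.pairwise_sort S _).sublist List.erase_sublist) ?_
  rw [← Multiset.coe_eq_coe, Finset.sort_eq, ← Multiset.coe_erase, Finset.sort_eq,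
    Finset.erase_val]

section Partitions

variable {n : ℕ}

@[simp]
theorem mem_partitionsOf {S : Finset (Fin n)} {P : Finset (Finset (Fin n))} :
    P ∈ partitionsOf S ↔ IsPartitionOf S P := by
  simp [partitionsOf]

theorem partitionsOf_singleton (s : Fin n) : partitionsOf {s} = {{{s}}} := by
  ext P
  rw [mem_partitionsOf, isPartitionOf_singleton_iff, Finset.mem_singleton]

theorem sum_partitionsOf_filter_singleton_mem {M : Type} [AddCommMonoid M]
    {S : Finset (Fin n)} {s : Fin n} (hs : s ∈ S) (g : Finset (Finset (Fin n)) → M) :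
    ∑ P ∈ (partitionsOf S).filter ({s} ∈ ·), g P =
      ∑ P ∈ partitionsOf (S.erase s), g (insert {s} P) := by
  refine Finset.sum_nbij' (fun P => P.erase {s}) (fun P => insert {s} P) ?_ ?_ ?_ ?_ ?_
  · intro P hP
    rw [Finset.mem_filter, mem_partitionsOf] at hP
    simpa using hP.1.erase_singleton hP.2
  · intro P hP
    rw [mem_partitionsOf] at hP
    simpa using hP.insert_singleton hs
  · intro P hP
    exact Finset.insert_erase (Finset.mem_filter.1 hP).2
  · intro P hP
    exact Finset.erase_insert ((mem_partitionsOf.1 hP).singleton_notMem (by simp))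
  · intro P hP
    rw [Finset.insert_erase (Finset.mem_filter.1 hP).2]

end Partitions

section UnitalFaces

variable {F A : Type} [Ring A] [Algebra ℂ A] {e : F → A} {φ : A →ₗ[ℂ] ℂ}

theorem map_mul_unit_mul_of_unit_mul
    (hideal : ∀ (x y : A) (q Q : F), φ (x * (e q - e Q) * y) = 0)
    {x y : A} {q : F} (h : e q * y = y) (Q : F) : φ (x * e Q * y) = φ (x * y) := by
  have h0 := hideal x y q Q
  rw [mul_sub, sub_mul, mul_assoc x (e q), h, map_sub, sub_eq_zero] at h0
  exact h0.symm

theorem map_mul_unit_mul_of_mul_unit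
    (hideal : ∀ (x y : A) (q Q : F), φ (x * (e q - e Q) * y) = 0)
    {x y : A} {q : F} (h : x * e q = x) (Q : F) : φ (x * e Q * y) = φ (x * y) := by
  have h0 := hideal x y q Q
  rw [mul_sub, sub_mul, h, map_sub, sub_eq_zero] at h0
  exact h0.symm

theorem map_prod_append_unit_cons
    (hideal : ∀ (x y : A) (q Q : F), φ (x * (e q - e Q) * y) = 0)
    {l₁ l₂ : List A} (hl : ∀ x ∈ l₁ ++ l₂, ∃ q, e q * x = x ∧ x * e q = x)
    (hne : l₁ ++ l₂ ≠ []) (Q : F) :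
    φ (l₁ ++ e Q :: l₂).prod = φ (l₁ ++ l₂).prod := by
  rw [List.prod_append, List.prod_cons, List.prod_append, ← mul_assoc]
  cases l₂ with
  | cons b t =>
    obtain ⟨q, hq, -⟩ := hl b (by simp)
    exact map_mul_unit_mul_of_unit_mul hideal (by rw [List.prod_cons, ← mul_assoc, hq]) Q
  | nil =>
    obtain ⟨l, b, rfl⟩ :=
      (List.eq_nil_or_concat' l₁).resolve_left (by simpa using hne)
    obtain ⟨q, -, hq⟩ := hl b (by simp)
    exact map_mul_unit_mul_of_mul_unit hideal
      (by rw [List.prod_append, List.prod_singleton, mul_assoc, hq]) Q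

theorem map_oprod_erase_unit
    (hideal : ∀ (x y : A) (q Q : F), φ (x * (e q - e Q) * y) = 0)
    {n : ℕ} {a : Fin n → A} {S : Finset (Fin n)} {s : Fin n} {Q : F} (hsS : s ∈ S)
    (hS : 2 ≤ S.card) (has : a s = e Q)
    (hunit : ∀ i ∈ S, i ≠ s → ∃ q, e q * a i = a i ∧ a i * e q = a i) :
    φ (oprod a S) = φ (oprod a (S.erase s)) := by
  obtain ⟨l₁, l₂, -, hsplit, herase⟩ :=
    List.exists_erase_eq ((Finset.mem_sort (· ≤ ·)).2 hsS)
  have hsort : (S.erase s).sort (· ≤ ·) = l₁ ++ l₂ := by rw [Finset.sort_erase_le, herase]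
  unfold oprod
  rw [hsort, hsplit, List.map_append, List.map_cons, has, List.map_append]
  refine map_prod_append_unit_cons hideal ?_ ?_ Q
  · intro x hx
    rw [← List.map_append] at hx
    obtain ⟨i, hi, rfl⟩ := List.mem_map.1 hx
    rw [← hsort, Finset.mem_sort] at hi
    exact hunit i (Finset.mem_of_mem_erase hi) (Finset.ne_of_mem_erase hi)
  · rw [← List.map_append, Ne, List.map_eq_nil_iff, ← hsort, ← List.length_eq_zero_iff,
      Finset.length_sort, Finset.card_erase_of_mem hsS]
    omega

end UnitalFaces

section Cumulants

variable {F A : Type} [Ring A] {α : MFP F → ℂ} {n : ℕ} {f : Fin n → F}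
  {c : Finset (Fin n) → ℂ}

theorem sum_partitionsOf_filter_singleton_notMem {S : Finset (Fin n)} {s : Fin n}
    (hmonic : α (MFP.ofBlocks f S {S}) = 1) (hsS : s ∈ S) (hS : 2 ≤ S.card)
    (hvanish : ∀ b ⊂ S, s ∈ b → 2 ≤ b.card → c b = 0) :
    ∑ P ∈ (partitionsOf S).filter ({s} ∉ ·), α (MFP.ofBlocks f S P) * ∏ β ∈ P, c β =
      c S := by
  have hSne : S.Nonempty := ⟨s, hsS⟩
  have htop : {S} ∈ (partitionsOf S).filter ({s} ∉ ·) := by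
    refine Finset.mem_filter.2 ⟨mem_partitionsOf.2 (isPartitionOf_singleton_self hSne), ?_⟩
    rintro h
    rw [← Finset.mem_singleton.1 h, Finset.card_singleton] at hS
    omega
  rw [Finset.sum_eq_single_of_mem _ htop, hmonic, one_mul, Finset.prod_singleton]
  intro P hP hPS
  obtain ⟨hP, hsP⟩ := Finset.mem_filter.1 hP
  rw [mem_partitionsOf] at hP
  obtain ⟨b, hbP, hsb⟩ := hP.exists_mem_block hsS
  refine mul_eq_zero_of_right _ (Finset.prod_eq_zero hbP (hvanish b ?_ hsb ?_))
  · exact Finset.ssubset_iff_subset_ne.2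
      ⟨(hP.1 b hbP).2, fun hbS => hPS (hP.eq_singleton_of_mem (hbS ▸ hbP))⟩
  · refine Finset.one_lt_card_iff_nontrivial.2 ((Finset.nontrivial_iff_ne_singleton hsb).2 ?_)
    rintro rfl
    exact hsP hbP

namespace MomentCumulantRel

variable {Φ : A → ℂ} {a : Fin n → A}

theorem apply_singleton (hc : MomentCumulantRel α f Φ a c) {i : Fin n}
    (hmonic : α (MFP.ofBlocks f {i} {{i}}) = 1) : c {i} = Φ (a i) := by
  have h := hc {i} (Finset.singleton_nonempty i)
  rw [partitionsOf_singleton, Finset.sum_singleton, Finset.prod_singleton, hmonic,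
    one_mul] at h
  simp [← h, oprod]

theorem eq_zero_of_mem (hc : MomentCumulantRel α f Φ a c)
    (hmonic : ∀ S : Finset (Fin n), S.Nonempty → α (MFP.ofBlocks f S {S}) = 1) {s : Fin n}
    (hsing : ∀ (S : Finset (Fin n)) (P : Finset (Finset (Fin n))), IsPartitionOf S P →
      {s} ∈ P → α (MFP.ofBlocks f S P) = α (MFP.ofBlocks f (S.erase s) (P.erase {s})))
    (hcs : c {s} = 1)
    (hΦ : ∀ S, s ∈ S → 2 ≤ S.card → Φ (oprod a S) = Φ (oprod a (S.erase s)))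
    (S : Finset (Fin n)) (hsS : s ∈ S) (hS : 2 ≤ S.card) : c S = 0 := by
  induction S using Finset.strongInduction with
  | H S ih =>
    have hinsert : ∀ P ∈ partitionsOf (S.erase s),
        α (MFP.ofBlocks f S (insert {s} P)) * ∏ β ∈ insert {s} P, c β =
          α (MFP.ofBlocks f (S.erase s) P) * ∏ β ∈ P, c β := by
      intro P hP
      have hnot := (mem_partitionsOf.1 hP).singleton_notMem (Finset.notMem_erase s S)
      rw [hsing S _ ((mem_partitionsOf.1 hP).insert_singleton hsS) (Finset.mem_insert_self _ _),
        Finset.erase_insert hnot, Finset.prod_insert hnot, hcs, one_mul]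
    have hmom : Φ (oprod a (S.erase s)) = Φ (oprod a (S.erase s)) + c S :=
      calc Φ (oprod a (S.erase s))
          = Φ (oprod a S) := (hΦ S hsS hS).symm
        _ = _ := hc S ⟨s, hsS⟩
        _ = _ := (Finset.sum_filter_add_sum_filter_not _ ({s} ∈ ·) _).symm
        _ = Φ (oprod a (S.erase s)) + c S := by
          rw [sum_partitionsOf_filter_singleton_mem hsS, Finset.sum_congr rfl hinsert,
            ← hc (S.erase s) (Finset.card_pos.1 (by rw [Finset.card_erase_of_mem hsS]; omega)),
            sum_partitionsOf_filter_singleton_notMem (hmonic S ⟨s, hsS⟩) hsS hS ih]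
    linear_combination -hmom

end MomentCumulantRel

end Cumulants

theorem stmt_14_general {F : Type} (A : Type) [Ring A] [Algebra ℂ A]
    (faceAlg : F → NonUnitalSubalgebra ℂ A) (e : F → A)
    (hunit : ∀ Q : F, ∀ x ∈ faceAlg Q, e Q * x = x ∧ x * e Q = x)
    (φ : A →ₗ[ℂ] ℂ)
    (hφe : ∀ Q : F, φ (e Q) = 1)
    (hideal : ∀ (x y : A) (q Q : F), φ (x * (e q - e Q) * y) = 0)
    (α : MFP F → ℂ)
    (hmonic : ∀ (k : ℕ) (f : Fin k → F) (S : Finset (Fin k)), S.Nonempty →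
      α (MFP.ofBlocks f S {S}) = 1)
    (hsing : ∀ (k : ℕ) (f : Fin k → F) (S : Finset (Fin k)) (P : Finset (Finset (Fin k)))
      (s : Fin k), IsPartitionOf S P → {s} ∈ P →
      α (MFP.ofBlocks f S P) = α (MFP.ofBlocks f (S.erase s) (P.erase {s})))
    {n : ℕ} (f : Fin n → F) (a : Fin n → A) (s : Fin n) (Q : F)
    (hmem : ∀ i : Fin n, i ≠ s → a i ∈ faceAlg (f i))
    (has : a s = e Q)
    (c : Finset (Fin n) → ℂ)
    (hc : MomentCumulantRel α f (fun x => φ x) a c)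
    (hn : 1 < n) :
    c Finset.univ = 0 := by
  refine hc.eq_zero_of_mem (hmonic n f) (hsing n f · · s) ?_ ?_ Finset.univ (Finset.mem_univ s)
    (by rwa [Finset.card_fin])
  · rw [hc.apply_singleton (hmonic n f {s} (Finset.singleton_nonempty s)), has, hφe]
  · intro S hsS hS
    exact map_oprod_erase_unit hideal hsS hS has
      fun i _ hi => ⟨f i, hunit (f i) (a i) (hmem i hi)⟩

/-- For monic, singleton-inductive weights `α`, a multi-faced algebra with unital faces
(units `1^Q = e Q`) and a linear functional `φ` which is `1` on each face unit and
vanishes on the ideal generated by the differences `1^q − 1^Q`, the `α`-cumulants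
(`log_α φ̂`) vanish on every tensor `a₁ ⊗ ⋯ ⊗ aₙ` with `n > 1` in which some entry is a
face unit. -/
theorem stmt_14 {F : Type} (A : Type) [Ring A] [Algebra ℂ A]
    (faceAlg : F → NonUnitalSubalgebra ℂ A) (e : F → A)
    (he : ∀ Q : F, e Q ∈ faceAlg Q)
    (hunit : ∀ Q : F, ∀ x ∈ faceAlg Q, e Q * x = x ∧ x * e Q = x)
    (φ : A →ₗ[ℂ] ℂ)
    (hφe : ∀ Q : F, φ (e Q) = 1)
    (hideal : ∀ (x y : A) (q Q : F), φ (x * (e q - e Q) * y) = 0)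
    (α : MFP F → ℂ)
    (hmonic : ∀ (k : ℕ) (f : Fin k → F) (S : Finset (Fin k)), S.Nonempty →
      α (MFP.ofBlocks f S {S}) = 1)
    (hsing : ∀ (k : ℕ) (f : Fin k → F) (S : Finset (Fin k)) (P : Finset (Finset (Fin k)))
      (s : Fin k), IsPartitionOf S P → {s} ∈ P →
      α (MFP.ofBlocks f S P) = α (MFP.ofBlocks f (S.erase s) (P.erase {s})))
    {n : ℕ} (f : Fin n → F) (a : Fin n → A) (s : Fin n) (Q : F)
    (hmem : ∀ i : Fin n, i ≠ s → a i ∈ faceAlg (f i))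
    (has : a s = e Q)
    (c : Finset (Fin n) → ℂ)
    (hc : MomentCumulantRel α f (fun x => φ x) a c)
    (hn : 1 < n) :
    c Finset.univ = 0 :=
  stmt_14_general A faceAlg e hunit φ hφe hideal α hmonic hsing f a s Q hmem has c hc hn
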